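/- Let every function in F be continuous, let φ be a bounded L_F-sentence, and let δ > 0. If α(φ) > 0 then φ is true, and if α(φ) < δ then the δ-strengthening φ^{+δ} is false. Consequently, for every bounded sentence φ and every δ > 0, at least one of the two conditions 'φ is true' or 'φ^{+δ} is false' is certified by comparing the real number α(φ) with 0 and δ. -/

import Mathlib

/-! Syntax and semantics of bounded first-order sentences over ℝ in a signature `S`
of real-valued functions containing 0, negation, addition, absolute value and all
rational constants. -/

/-- A signature: for each arity `n`, a set of functions `(Fin n → ℝ) → ℝ`, required to
contain the constant `0`, unary negation, addition, the absolute value, and all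
rational constants. -/
structure Sig : Type 1 where
  mem : ∀ n : ℕ, Set ((Fin n → ℝ) → ℝ)
  zero_mem : (fun _ : Fin 0 → ℝ => (0 : ℝ)) ∈ mem 0
  neg_mem : (fun v : Fin 1 → ℝ => -(v 0)) ∈ mem 1
  add_mem : (fun v : Fin 2 → ℝ => v 0 + v 1) ∈ mem 2
  abs_mem : (fun v : Fin 1 → ℝ => |v 0|) ∈ mem 1
  rat_mem : ∀ q : ℚ, (fun _ : Fin 0 → ℝ => (q : ℝ)) ∈ mem 0

/-- Terms: variables (indexed by ℕ) and applications of functions of the signature. -/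
inductive RTerm (S : Sig) : Type
  | var : ℕ → RTerm S
  | app : (k : ℕ) → (f : (Fin k → ℝ) → ℝ) → f ∈ S.mem k → (Fin k → RTerm S) → RTerm S

variable {S : Sig}

/-- Value of a term under an assignment of the variables. -/
noncomputable def RTerm.eval (σ : ℕ → ℝ) : RTerm S → ℝ
  | .var n => σ n
  | .app _ f _ ts => f fun i => (ts i).eval σ

/-- The variable `x` occurs in the term. -/
def RTerm.Occurs (x : ℕ) : RTerm S → Prop
  | .var n => n = x
  | .app _ _ _ ts => ∃ i, (ts i).Occurs x

/-- The term `-t`, built from the unary negation of the signature. -/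
def RTerm.negT (t : RTerm S) : RTerm S :=
  .app 1 (fun v : Fin 1 → ℝ => -(v 0)) S.neg_mem fun _ => t

/-- Bounded `L_F`-formulas.  An atom `gt t c` (resp. `ge t c`) is the inequality
`t > c` (resp. `t ≥ c`).  Genuine `L_F`-formulas have all atom thresholds `c = 0`
(`RFormula.Zeroed`); nonzero thresholds arise from the δ-perturbations. -/
inductive RFormula (S : Sig) : Type
  | gt : RTerm S → ℝ → RFormula S
  | ge : RTerm S → ℝ → RFormula S
  | and : RFormula S → RFormula S → RFormula S
  | or : RFormula S → RFormula S → RFormula S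
  | ex : ℕ → RTerm S → RTerm S → RFormula S → RFormula S
  | all : ℕ → RTerm S → RTerm S → RFormula S → RFormula S

/-- Standard semantics over ℝ; the bound `[u,v]` is read as the closed interval
between `min u v` and `max u v` (`Set.uIcc`). -/
def RFormula.Holds : RFormula S → (ℕ → ℝ) → Prop
  | .gt t c, σ => t.eval σ > c
  | .ge t c, σ => t.eval σ ≥ c
  | .and φ ψ, σ => φ.Holds σ ∧ ψ.Holds σ
  | .or φ ψ, σ => φ.Holds σ ∨ ψ.Holds σ
  | .ex x u v φ, σ => ∃ a ∈ Set.uIcc (u.eval σ) (v.eval σ), φ.Holds (Function.update σ x a)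
  | .all x u v φ, σ => ∀ a ∈ Set.uIcc (u.eval σ) (v.eval σ), φ.Holds (Function.update σ x a)

/-- Truth of a (closed) formula: it holds under the (irrelevant) zero assignment. -/
def RFormula.IsTrue (φ : RFormula S) : Prop := φ.Holds fun _ => 0

/-- The variable `x` occurs free in the formula. -/
def RFormula.FreeIn (x : ℕ) : RFormula S → Prop
  | .gt t _ => t.Occurs x
  | .ge t _ => t.Occurs x
  | .and φ ψ => φ.FreeIn x ∨ ψ.FreeIn x
  | .or φ ψ => φ.FreeIn x ∨ ψ.FreeIn x
  | .ex y u v φ => u.Occurs x ∨ v.Occurs x ∨ (x ≠ y ∧ φ.FreeIn x)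
  | .all y u v φ => u.Occurs x ∨ v.Occurs x ∨ (x ≠ y ∧ φ.FreeIn x)

/-- A sentence has no free variables. -/
def RFormula.IsSentence (φ : RFormula S) : Prop := ∀ x, ¬ φ.FreeIn x

/-- The bound terms of each quantifier do not involve the quantified variable. -/
def RFormula.BoundsOK : RFormula S → Prop
  | .gt _ _ => True
  | .ge _ _ => True
  | .and φ ψ => φ.BoundsOK ∧ ψ.BoundsOK
  | .or φ ψ => φ.BoundsOK ∧ ψ.BoundsOK
  | .ex x u v φ => ¬ u.Occurs x ∧ ¬ v.Occurs x ∧ φ.BoundsOK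
  | .all x u v φ => ¬ u.Occurs x ∧ ¬ v.Occurs x ∧ φ.BoundsOK

/-- All atom thresholds are `0`, i.e. all atoms are of the form `t > 0` or `t ≥ 0`. -/
def RFormula.Zeroed : RFormula S → Prop
  | .gt _ c => c = 0
  | .ge _ c => c = 0
  | .and φ ψ => φ.Zeroed ∧ ψ.Zeroed
  | .or φ ψ => φ.Zeroed ∧ ψ.Zeroed
  | .ex _ _ _ φ => φ.Zeroed
  | .all _ _ _ φ => φ.Zeroed

/-- A bounded `L_F`-sentence: atoms `t > 0` / `t ≥ 0`, quantifier bounds not involving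
the quantified variable, and no free variables. -/
def RFormula.IsBoundedSentence (φ : RFormula S) : Prop :=
  φ.Zeroed ∧ φ.BoundsOK ∧ φ.IsSentence

/-- δ-strengthening `φ^{+δ}`: every atom `t > 0` becomes `t > δ`, every `t ≥ 0`
becomes `t ≥ δ` (quantifier bounds unchanged). -/
def RFormula.strengthen (δ : ℝ) : RFormula S → RFormula S
  | .gt t c => .gt t (c + δ)
  | .ge t c => .ge t (c + δ)
  | .and φ ψ => .and (φ.strengthen δ) (ψ.strengthen δ)
  | .or φ ψ => .or (φ.strengthen δ) (ψ.strengthen δ)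
  | .ex x u v φ => .ex x u v (φ.strengthen δ)
  | .all x u v φ => .all x u v (φ.strengthen δ)

/-- δ-weakening `φ^{-δ}`: every atom `t > 0` becomes `t > -δ`, every `t ≥ 0`
becomes `t ≥ -δ` (quantifier bounds unchanged). -/
def RFormula.weaken (δ : ℝ) : RFormula S → RFormula S
  | .gt t c => .gt t (c - δ)
  | .ge t c => .ge t (c - δ)
  | .and φ ψ => .and (φ.weaken δ) (ψ.weaken δ)
  | .or φ ψ => .or (φ.weaken δ) (ψ.weaken δ)
  | .ex x u v φ => .ex x u v (φ.weaken δ)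
  | .all x u v φ => .all x u v (φ.weaken δ)

/-- Syntactic negation: `t > c ↦ -t ≥ -c`, `t ≥ c ↦ -t > -c`, swapping `∧`/`∨` and
`∃`/`∀` (quantifier bounds unchanged).  On zero-threshold atoms this is exactly
`t > 0 ↦ -t ≥ 0` and `t ≥ 0 ↦ -t > 0`. -/
def RFormula.neg : RFormula S → RFormula S
  | .gt t c => .ge t.negT (-c)
  | .ge t c => .gt t.negT (-c)
  | .and φ ψ => .or φ.neg ψ.neg
  | .or φ ψ => .and φ.neg ψ.neg
  | .ex x u v φ => .all x u v φ.neg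
  | .all x u v φ => .ex x u v φ.neg

/-- Strictification `st(φ)`: every nonstrict atom becomes strict. -/
def RFormula.strict : RFormula S → RFormula S
  | .gt t c => .gt t c
  | .ge t c => .gt t c
  | .and φ ψ => .and φ.strict ψ.strict
  | .or φ ψ => .or φ.strict ψ.strict
  | .ex x u v φ => .ex x u v φ.strict
  | .all x u v φ => .all x u v φ.strict

/-- Destrictification `de(φ)`: every strict atom becomes nonstrict. -/
def RFormula.destrict : RFormula S → RFormula S
  | .gt t c => .ge t c
  | .ge t c => .ge t c
  | .and φ ψ => .and φ.destrict ψ.destrict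
  | .or φ ψ => .or φ.destrict ψ.destrict
  | .ex x u v φ => .ex x u v φ.destrict
  | .all x u v φ => .all x u v φ.destrict

/-- `φ` is δ-robust: truth of the δ-weakening implies truth of `φ`. -/
def RFormula.Robust (δ : ℝ) (φ : RFormula S) : Prop :=
  (φ.weaken δ).IsTrue → φ.IsTrue

/-- All functions of the signature are continuous. -/
def Sig.ContinuousFuns (S : Sig) : Prop :=
  ∀ (k : ℕ) (f : (Fin k → ℝ) → ℝ), f ∈ S.mem k → Continuous f

/-- The translation `α`: atoms give the (shifted) term value, `∧ ↦ min`, `∨ ↦ max`,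
`∃x∈[u,v] ↦ max over the interval`, `∀x∈[u,v] ↦ min over the interval` (the extrema
are expressed via `sSup`/`sInf` of the image; when all functions of the signature are
continuous they are attained, the intervals being nonempty and compact). -/
noncomputable def RFormula.alpha : RFormula S → (ℕ → ℝ) → ℝ
  | .gt t c, σ => t.eval σ - c
  | .ge t c, σ => t.eval σ - c
  | .and φ ψ, σ => min (φ.alpha σ) (ψ.alpha σ)
  | .or φ ψ, σ => max (φ.alpha σ) (ψ.alpha σ)
  | .ex x u v φ, σ =>
      sSup ((fun a => φ.alpha (Function.update σ x a)) '' Set.uIcc (u.eval σ) (v.eval σ))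
  | .all x u v φ, σ =>
      sInf ((fun a => φ.alpha (Function.update σ x a)) '' Set.uIcc (u.eval σ) (v.eval σ))

/-! The quantity `α` is continuous in the assignment: extrema of a jointly continuous function
over an interval with continuously moving endpoints vary continuously. Hence the extrema
defining `α` on quantifiers are attained, and a structural induction shows both that
`α(φ) > 0` forces `φ` and that `φ^{+δ}` forces `α(φ) ≥ δ`. Since `α(φ) > 0` or `α(φ) ≤ 0 < δ`,
one of the two certificates always applies. -/

open Set Function AffineMap

theorem uIcc_eq_image_lineMap (a b : ℝ) : uIcc a b = lineMap a b '' Icc (0 : ℝ) 1 := by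
  rw [← segment_eq_uIcc, segment_eq_image_lineMap]

section MovingInterval

variable {X α : Type*} [TopologicalSpace X] [ConditionallyCompleteLinearOrder α]
  [TopologicalSpace α] [OrderTopology α] {u v : X → ℝ} {g : X → ℝ → α}

theorem continuous_sSup_image_uIcc (hu : Continuous u) (hv : Continuous v)
    (hg : Continuous ↿g) : Continuous fun x => sSup (g x '' uIcc (u x) (v x)) := by
  simp_rw [uIcc_eq_image_lineMap, image_image]
  exact isCompact_Icc.continuous_sSup <| hg.comp <| continuous_fst.prodMk <|
    (hu.comp continuous_fst).lineMap (hv.comp continuous_fst) continuous_snd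

theorem continuous_sInf_image_uIcc (hu : Continuous u) (hv : Continuous v)
    (hg : Continuous ↿g) : Continuous fun x => sInf (g x '' uIcc (u x) (v x)) :=
  continuous_sSup_image_uIcc (α := αᵒᵈ) hu hv hg

end MovingInterval

theorem RTerm.continuous_eval (hS : S.ContinuousFuns) (t : RTerm S) :
    Continuous fun σ => t.eval σ := by
  induction t with
  | var n => exact continuous_apply n
  | app k f hf ts ih => exact (hS k f hf).comp (continuous_pi ih)

namespace RFormula

variable (hS : S.ContinuousFuns)
include hS

theorem continuous_alpha (φ : RFormula S) : Continuous φ.alpha := by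
  induction φ with
  | gt t c | ge t c => exact (t.continuous_eval hS).sub continuous_const
  | and φ ψ ihφ ihψ => exact ihφ.min ihψ
  | or φ ψ ihφ ihψ => exact ihφ.max ihψ
  | ex x u v φ ih =>
    exact continuous_sSup_image_uIcc (u.continuous_eval hS) (v.continuous_eval hS)
      (ih.comp (continuous_update x))
  | all x u v φ ih =>
    exact continuous_sInf_image_uIcc (u.continuous_eval hS) (v.continuous_eval hS)
      (ih.comp (continuous_update x))

theorem continuous_alpha_update (φ : RFormula S) (σ : ℕ → ℝ) (x : ℕ) :
    Continuous fun a => φ.alpha (update σ x a) :=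
  (φ.continuous_alpha hS).comp (continuous_const.update x continuous_id)

theorem holds_of_alpha_pos (φ : RFormula S) {σ : ℕ → ℝ} (h : 0 < φ.alpha σ) : φ.Holds σ := by
  induction φ generalizing σ with
  | gt t c => exact sub_pos.mp h
  | ge t c => exact (sub_pos.mp h).le
  | and φ ψ ihφ ihψ => exact ⟨ihφ (lt_min_iff.mp h).1, ihψ (lt_min_iff.mp h).2⟩
  | or φ ψ ihφ ihψ => exact (lt_max_iff.mp h).imp ihφ ihψ
  | ex x u v φ ih =>
    obtain ⟨a, ha, hmax⟩ := isCompact_uIcc.exists_sSup_image_eq nonempty_uIcc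
      (φ.continuous_alpha_update hS σ x).continuousOn
    exact ⟨a, ha, ih (h.trans_eq hmax)⟩
  | all x u v φ ih =>
    intro a ha
    have hbdd := isCompact_uIcc.bddBelow_image (φ.continuous_alpha_update hS σ x).continuousOn
      (K := uIcc (u.eval σ) (v.eval σ))
    exact ih (h.trans_le (csInf_le hbdd (mem_image_of_mem _ ha)))

theorem le_alpha_of_holds_strengthen {δ : ℝ} (φ : RFormula S) {σ : ℕ → ℝ}
    (h : (φ.strengthen δ).Holds σ) : δ ≤ φ.alpha σ := by
  induction φ generalizing σ with
  | gt t c => exact le_sub_iff_add_le'.mpr (le_of_lt h)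
  | ge t c => exact le_sub_iff_add_le'.mpr h
  | and φ ψ ihφ ihψ => exact le_min (ihφ h.1) (ihψ h.2)
  | or φ ψ ihφ ihψ =>
    exact h.elim (fun hφ => le_max_of_le_left (ihφ hφ)) fun hψ => le_max_of_le_right (ihψ hψ)
  | ex x u v φ ih =>
    obtain ⟨a, ha, hφ⟩ := h
    have hbdd := isCompact_uIcc.bddAbove_image (φ.continuous_alpha_update hS σ x).continuousOn
      (K := uIcc (u.eval σ) (v.eval σ))
    exact (ih hφ).trans (le_csSup hbdd (mem_image_of_mem _ ha))
  | all x u v φ ih =>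
    refine le_csInf (nonempty_uIcc.image _) ?_
    rintro _ ⟨a, ha, rfl⟩
    exact ih (h a ha)

end RFormula

theorem delta_decision_certificate_general (S : Sig) (hS : S.ContinuousFuns)
    (φ : RFormula S) (δ : ℝ) (hδ : 0 < δ) :
    (φ.alpha (fun _ => 0) > 0 → φ.IsTrue) ∧
    (φ.alpha (fun _ => 0) < δ → ¬ (φ.strengthen δ).IsTrue) ∧
    (φ.IsTrue ∨ ¬ (φ.strengthen δ).IsTrue) := by
  have certify_true : φ.alpha (fun _ => 0) > 0 → φ.IsTrue := φ.holds_of_alpha_pos hS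
  have certify_false : φ.alpha (fun _ => 0) < δ → ¬ (φ.strengthen δ).IsTrue :=
    fun hlt htrue => (φ.le_alpha_of_holds_strengthen hS htrue).not_gt hlt
  refine ⟨certify_true, certify_false, ?_⟩
  rcases lt_or_ge 0 (φ.alpha fun _ => 0) with hpos | hnonpos
  · exact .inl (certify_true hpos)
  · exact .inr (certify_false (hnonpos.trans_lt hδ))

theorem delta_decision_certificate (S : Sig) (hS : S.ContinuousFuns)
    (φ : RFormula S) (hφ : φ.IsBoundedSentence) (δ : ℝ) (hδ : 0 < δ) :
    (φ.alpha (fun _ => 0) > 0 → φ.IsTrue) ∧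
    (φ.alpha (fun _ => 0) < δ → ¬ (φ.strengthen δ).IsTrue) ∧
    (φ.IsTrue ∨ ¬ (φ.strengthen δ).IsTrue) :=
  delta_decision_certificate_general S hS φ δ hδ
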